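/- arXiv:2003.09539 — 2 statements merged into one kernel-verified Lean document; each statement's English description precedes it below -/
import Mathlib

section
/- Let N be a positive real number, D ≥ 1 a natural number, and S₂ ≥ 0 a real number such that (D−1)·S₂ < N. Then Σ_{i=1}^{D} log₂(N − (i−1)·S₂) ≤ D·log₂ N − D·(D−1)·S₂ / (2·N). -/
/-!
Write the `i`-th term as `log₂ N + log₂ (1 - xᵢ)` with `xᵢ = (i - 1) S₂ / N ∈ [0, 1)`.
Since `ln (1 - x) ≤ -x ≤ 0` and `0 < ln 2 ≤ 1`, we get `log₂ (1 - x) = ln (1 - x) / ln 2 ≤ -x`;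
summing the arithmetic progression `xᵢ` gives the correction term `D (D - 1) S₂ / (2N)`.
-/

open Real Finset

lemma Real.logb_one_sub_le_neg {b x : ℝ} (hb : 1 < b) (hb_log : log b ≤ 1)
    (hx₀ : 0 ≤ x) (hx₁ : x < 1) : logb b (1 - x) ≤ -x := by
  have hlog_b : 0 < log b := log_pos hb
  have hlog : log (1 - x) ≤ -x := by
    linarith [log_le_sub_one_of_pos (sub_pos.2 hx₁)]
  calc logb b (1 - x) = log (1 - x) / log b := rfl
    _ ≤ -x / log b := by gcongr
    _ ≤ -x := by
      rw [neg_div, neg_le_neg_iff]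
      exact le_div_self hx₀ hlog_b hb_log

lemma Real.logb_sub_le_logb_sub_div {b N t : ℝ} (hb : 1 < b) (hb_log : log b ≤ 1)
    (hN : 0 < N) (ht₀ : 0 ≤ t) (htN : t < N) : logb b (N - t) ≤ logb b N - t / N := by
  have htN' : t / N < 1 := (div_lt_one hN).2 htN
  have hfactor : N - t = N * (1 - t / N) := by field_simp
  rw [hfactor, logb_mul hN.ne' (sub_pos.2 htN').ne']
  linarith [logb_one_sub_le_neg hb hb_log (div_nonneg ht₀ hN.le) htN']

lemma Finset.sum_Icc_one_cast_sub_one {K : Type*} [Field K] [CharZero K] (n : ℕ) :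
    ∑ i ∈ Icc 1 n, ((i : K) - 1) = n * (n - 1) / 2 := by
  induction n with
  | zero => simp
  | succ n ih =>
    rw [sum_Icc_succ_top (Nat.le_add_left 1 n), ih]
    push_cast
    field_simp
    ring

theorem aid_upper_bound_general (N : ℝ) (hN : 0 < N) (D : ℕ)
    (S₂ : ℝ) (hS₂ : 0 ≤ S₂) (h : ((D : ℝ) - 1) * S₂ < N) :
    ∑ i ∈ Finset.Icc 1 D, Real.logb 2 (N - ((i : ℝ) - 1) * S₂)
      ≤ (D : ℝ) * Real.logb 2 N - (D : ℝ) * ((D : ℝ) - 1) * S₂ / (2 * N) := by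
  have hlog_two : log 2 ≤ 1 := by
    linarith [log_le_sub_one_of_pos (zero_lt_two' ℝ)]
  have hterm : ∀ i ∈ Icc 1 D,
      logb 2 (N - ((i : ℝ) - 1) * S₂) ≤ logb 2 N - ((i : ℝ) - 1) * S₂ / N := by
    intro i hi
    obtain ⟨hi₁, hiD⟩ := mem_Icc.1 hi
    have hi₁' : (1 : ℝ) ≤ i := by exact_mod_cast hi₁
    have hiD' : (i : ℝ) ≤ D := by exact_mod_cast hiD
    refine logb_sub_le_logb_sub_div one_lt_two hlog_two hN
      (mul_nonneg (sub_nonneg.2 hi₁') hS₂) ?_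
    calc ((i : ℝ) - 1) * S₂ ≤ ((D : ℝ) - 1) * S₂ := by gcongr
      _ < N := h
  calc ∑ i ∈ Icc 1 D, logb 2 (N - ((i : ℝ) - 1) * S₂)
      ≤ ∑ i ∈ Icc 1 D, (logb 2 N - ((i : ℝ) - 1) * S₂ / N) := sum_le_sum hterm
    _ = (D : ℝ) * logb 2 N - (D : ℝ) * ((D : ℝ) - 1) * S₂ / (2 * N) := by
      rw [sum_sub_distrib, sum_const, Nat.card_Icc, Nat.add_sub_cancel, nsmul_eq_mul,
        ← sum_div, ← sum_mul, sum_Icc_one_cast_sub_one]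
      field_simp

/-- Rigorous form of the paper's upper-bound theorem (Theorem 4): for a positive real
`N`, a natural `D ≥ 1` and a real `S₂ ≥ 0` with `(D−1)·S₂ < N`,
`Σ_{i=1}^{D} log₂(N − (i−1)·S₂) ≤ D·log₂ N − D·(D−1)·S₂ / (2·N)`. -/
theorem aid_upper_bound (N : ℝ) (hN : 0 < N) (D : ℕ) (hD : 1 ≤ D)
    (S₂ : ℝ) (hS₂ : 0 ≤ S₂) (h : ((D : ℝ) - 1) * S₂ < N) :
    ∑ i ∈ Finset.Icc 1 D, Real.logb 2 (N - ((i : ℝ) - 1) * S₂)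
      ≤ (D : ℝ) * Real.logb 2 N - (D : ℝ) * ((D : ℝ) - 1) * S₂ / (2 * N) :=
  aid_upper_bound_general N hN D S₂ hS₂ h
end

section
/- Let J, B, n be natural numbers, and consider the partial order on Fin J × Fin B × Fin n in which (j, b, i) ≤ (j', b', i') iff j < j', or (j = j' and b = b' and i ≤ i'). Then the number of subsets that are chains (including the empty set) equals (B·(2^n − 1) + 1)^J. -/
/-- `SymACM J B n` is `Fin J × Fin B × Fin n`: the predicates of the symmetric
Approximate Causal DAG with `J` junction-separated segments, `B` branches per
segment, and `n` predicates per branch. -/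
def SymACM (J B n : ℕ) := Fin J × Fin B × Fin n

/-- The reachability partial order of the symmetric Approximate Causal DAG:
`(j, b, i) ≤ (j', b', i')` iff `j < j'`, or (`j = j'` and `b = b'` and `i ≤ i'`). -/
instance (J B n : ℕ) : PartialOrder (SymACM J B n) where
  le x y := x.1 < y.1 ∨ (x.1 = y.1 ∧ x.2.1 = y.2.1 ∧ x.2.2 ≤ y.2.2)
  le_refl x := Or.inr ⟨rfl, rfl, le_refl _⟩
  le_trans x y z h₁ h₂ := by
    obtain ⟨x₁, x₂, x₃⟩ := x; obtain ⟨y₁, y₂, y₃⟩ := y; obtain ⟨z₁, z₂, z₃⟩ := z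
    simp only [Fin.lt_def, Fin.le_def, Fin.ext_iff] at h₁ h₂ ⊢
    omega
  le_antisymm x y h₁ h₂ := by
    obtain ⟨x₁, x₂, x₃⟩ := x; obtain ⟨y₁, y₂, y₃⟩ := y
    simp only [Fin.lt_def, Fin.le_def, Fin.ext_iff] at h₁ h₂
    have h : x₁ = y₁ ∧ x₂ = y₂ ∧ x₃ = y₃ := by
      simp only [Fin.ext_iff]; omega
    exact Prod.ext h.1 (Prod.ext h.2.1 h.2.2)

/-!
The order is the ordinal sum, over the `J` linearly ordered segments, of one segment order:
`B` disjoint copies of the `n`-element chain. A set is a chain of an ordinal sum iff each of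
its fibres is a chain of the summand, so chains are `J`-tuples of segment chains. A chain of
`B` parallel chains is empty or a nonempty subset of a single branch, which leaves
`B * (2 ^ n - 1) + 1` choices per segment.
-/
open Set

section OrdinalSum

variable {ι α : Type*} [LinearOrder ι] {r : α → α → Prop}

theorem isChain_prodLex_iff {s : Set (ι × α)} :
    IsChain (Prod.Lex (· < ·) r) s ↔ ∀ i, IsChain r {a | (i, a) ∈ s} := by
  constructor
  · intro hs i a ha b hb hab
    simpa [Prod.lex_iff] using hs ha hb (by simpa using hab)
  · rintro hs ⟨i, a⟩ ha ⟨j, b⟩ hb hab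
    rcases lt_trichotomy i j with hij | rfl | hji
    · exact Or.inl (.left _ _ hij)
    · rcases hs i ha hb (by simpa using hab) with h | h
      exacts [Or.inl (.right _ h), Or.inr (.right _ h)]
    · exact Or.inr (.left _ _ hji)

theorem card_isChain_prodLex [Finite ι] :
    Nat.card {s : Set (ι × α) // IsChain (Prod.Lex (· < ·) r) s}
      = Nat.card {t : Set α // IsChain r t} ^ Nat.card ι := by
  rw [← Nat.card_fun]
  -- `Set (ι × α)` is `ι × α → Prop`, so currying sends a set to its family of fibres.
  exact Nat.card_congr <|
    ((Equiv.curry ι α Prop).subtypeEquiv fun _ => isChain_prodLex_iff).trans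
      Equiv.subtypePiEquivPi

end OrdinalSum

section SingleFiber

variable {β γ : Type*}

theorem Set.card_nonempty_subtype [Finite γ] :
    Nat.card {u : Set γ // u.Nonempty} = 2 ^ Nat.card γ - 1 := by
  classical
  have := Fintype.ofFinite γ
  simp only [nonempty_iff_ne_empty]
  rw [Nat.card_eq_fintype_card, Fintype.card_subtype_compl, Fintype.card_set,
    Fintype.card_subtype_eq, Nat.card_eq_fintype_card]

variable (β γ) in
def singleFiberSet : Option (β × {u : Set γ // u.Nonempty}) → Set (β × γ)
  | none => ∅
  | some (b, u) => {b} ×ˢ u.1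

theorem singleFiberSet_injective : Function.Injective (singleFiberSet β γ) := by
  rintro (_ | ⟨b, u, hu⟩) (_ | ⟨b', u', hu'⟩) h
  · rfl
  · exact absurd h.symm ((singleton_nonempty b').prod hu').ne_empty
  · exact absurd h ((singleton_nonempty b).prod hu).ne_empty
  · obtain ⟨hb, rfl⟩ := (prod_eq_prod_iff_of_nonempty ((singleton_nonempty b).prod hu)).1 h
    obtain rfl := singleton_eq_singleton_iff.1 hb
    rfl

theorem range_singleFiberSet :
    range (singleFiberSet β γ) = {t | (Prod.fst '' t).Subsingleton} := by
  ext t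
  constructor
  · rintro ⟨_ | ⟨b, u⟩, rfl⟩
    · simp [singleFiberSet]
    · exact subsingleton_singleton.anti (fst_image_prod_subset _ _)
  · intro ht
    obtain rfl | ⟨x, hx⟩ := t.eq_empty_or_nonempty
    · exact ⟨none, rfl⟩
    refine ⟨some (x.1, ⟨{c | (x.1, c) ∈ t}, x.2, hx⟩), ?_⟩
    ext ⟨b, c⟩
    simp only [singleFiberSet, mem_prod, mem_singleton_iff]
    constructor
    · rintro ⟨rfl, h⟩
      exact h
    · intro h
      obtain rfl : b = x.1 := ht (mem_image_of_mem _ h) (mem_image_of_mem _ hx)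
      exact ⟨rfl, h⟩

theorem card_subsingleton_image_fst [Finite β] [Finite γ] :
    Nat.card {t : Set (β × γ) // (Prod.fst '' t).Subsingleton}
      = Nat.card β * (2 ^ Nat.card γ - 1) + 1 :=
  calc Nat.card {t : Set (β × γ) // (Prod.fst '' t).Subsingleton}
      = Nat.card (range (singleFiberSet β γ)) := by rw [range_singleFiberSet]; rfl
    _ = Nat.card (Option (β × {u : Set γ // u.Nonempty})) :=
        Nat.card_range_of_injective singleFiberSet_injective
    _ = Nat.card β * (2 ^ Nat.card γ - 1) + 1 := by
        rw [Finite.card_option, Nat.card_prod, Set.card_nonempty_subtype]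

end SingleFiber

section ParallelChains

variable {β γ : Type*} [LinearOrder γ]

-- One segment: `β` parallel branches, each a copy of the chain `γ`.
def ParallelLE (x y : β × γ) : Prop := x.1 = y.1 ∧ x.2 ≤ y.2

theorem isChain_parallelLE_iff {t : Set (β × γ)} :
    IsChain ParallelLE t ↔ (Prod.fst '' t).Subsingleton := by
  constructor
  · rintro ht _ ⟨x, hx, rfl⟩ _ ⟨y, hy, rfl⟩
    obtain rfl | hxy := eq_or_ne x y
    · rfl
    · rcases ht hx hy hxy with h | h
      exacts [h.1, h.1.symm]
  · intro ht x hx y hy _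
    have hxy : x.1 = y.1 := ht (mem_image_of_mem _ hx) (mem_image_of_mem _ hy)
    rcases le_total x.2 y.2 with h | h
    exacts [Or.inl ⟨hxy, h⟩, Or.inr ⟨hxy.symm, h⟩]

theorem card_isChain_parallelLE [Finite β] [Finite γ] :
    Nat.card {t : Set (β × γ) // IsChain ParallelLE t}
      = Nat.card β * (2 ^ Nat.card γ - 1) + 1 := by
  simp only [isChain_parallelLE_iff, card_subsingleton_image_fst]

end ParallelChains

/-- The number of chain subsets (including `∅`) of the symmetric Approximate Causal
DAG order is `(B·(2^n − 1) + 1)^J`: the size of the Causal Path Discovery search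
space. -/
theorem card_chains_symACM (J B n : ℕ) :
    Nat.card {s : Finset (SymACM J B n) // IsChain (· ≤ ·) (s : Set (SymACM J B n))}
      = (B * (2 ^ n - 1) + 1) ^ J := by
  have hle : ((· ≤ ·) : SymACM J B n → SymACM J B n → Prop) = Prod.Lex (· < ·) ParallelLE := by
    ext x y
    exact (Prod.lex_iff (r := (· < ·)) (s := ParallelLE)).symm
  calc Nat.card {s : Finset (SymACM J B n) // IsChain (· ≤ ·) (s : Set (SymACM J B n))}
      = Nat.card {s : Set (Fin J × Fin B × Fin n) // IsChain (Prod.Lex (· < ·) ParallelLE) s} :=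
        Nat.card_congr <| (Fintype.finsetEquivSet (α := Fin J × Fin B × Fin n)).subtypeEquiv
          fun _ => by rw [hle]; rfl
    _ = Nat.card {t : Set (Fin B × Fin n) // IsChain ParallelLE t} ^ J := by
        rw [card_isChain_prodLex, Nat.card_fin]
    _ = (B * (2 ^ n - 1) + 1) ^ J := by
        rw [card_isChain_parallelLE, Nat.card_fin, Nat.card_fin]
end
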